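/- Let W be a translation invariant operator on ℓ²(ℤ) ⊗ ℂ^d with Fourier transform Ŵ(k), and let W_r be the operator regrouped onto ℓ²(ℤ) ⊗ ℂ^{2d} by pairing cells 2x and 2x+1. Then the Fourier transform of W_r satisfies Ŵ_r(k) = H(k/2) · diag(Ŵ(k/2), Ŵ(k/2 + π)) · H(k/2)*, where H(k) = (1/√2)[[1, 1],[e^{-ik}, -e^{-ik}]] ⊗ 1_d. -/

import Mathlib

open scoped Matrix Real

/-- The symbol (Fourier transform) `Ŵ(k) = Σ_x e^{ikx} W(x)` of a translation invariant
operator with convolution coefficients `w`. -/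
noncomputable def symbolOf {ι : Type*} (w : ℤ → Matrix ι ι ℂ) (k : ℝ) :
    Matrix ι ι ℂ :=
  Matrix.of fun i j => ∑' x : ℤ, Complex.exp (Complex.I * (k : ℂ) * (x : ℂ)) * w x i j

/-- The unitary `H(k) = (1/√2)[[1, 1],[e^{-ik}, -e^{-ik}]] ⊗ 1_d` appearing in the
regrouping formula. -/
noncomputable def regroupH (d : ℕ) (k : ℝ) :
    Matrix (Fin d ⊕ Fin d) (Fin d ⊕ Fin d) ℂ :=
  ((1 / Real.sqrt 2 : ℝ) : ℂ) •
    Matrix.fromBlocks 1 1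
      (Complex.exp (-Complex.I * (k : ℂ)) • 1) (-(Complex.exp (-Complex.I * (k : ℂ))) • 1)

/-- The convolution coefficients of the regrouped walk obtained by pairing cells `2x`
and `2x+1`. -/
def regroupCoeff {d : ℕ} (w : ℤ → Matrix (Fin d) (Fin d) ℂ) (x : ℤ) :
    Matrix (Fin d ⊕ Fin d) (Fin d ⊕ Fin d) ℂ :=
  Matrix.fromBlocks (w (2 * x)) (w (2 * x - 1)) (w (2 * x + 1)) (w (2 * x))

lemma summable_phase (q : ℝ) (u : ℤ → ℂ) (hu : Summable u) :
    Summable (fun y : ℤ => Complex.exp (Complex.I * (q:ℂ) * y) * u y) := by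
  rw [← summable_norm_iff]
  have h : ∀ y : ℤ, ‖Complex.exp (Complex.I * (q:ℂ) * y) * u y‖ = ‖u y‖ := by
    intro y
    rw [norm_mul, show Complex.I * (q:ℂ) * y = ((q * y : ℝ) : ℂ) * Complex.I by push_cast; ring]
    rw [Complex.norm_exp_ofReal_mul_I, one_mul]
  simp_rw [h]
  exact summable_norm_iff.mpr hu

lemma exp_shift (q : ℝ) (y : ℤ) :
    Complex.exp (Complex.I * ((q + π : ℝ):ℂ) * y)
      = Complex.exp (Complex.I * (q:ℂ) * y) * (-1 : ℂ) ^ y := by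
  push_cast
  rw [show Complex.I * ((q:ℂ) + (π:ℂ)) * y = Complex.I*(q:ℂ)*y + (y:ℂ)*((π:ℂ)*Complex.I) by ring,
    Complex.exp_add, Complex.exp_int_mul, Complex.exp_pi_mul_I]

lemma tsum_even_half (k : ℝ) (u : ℤ → ℂ) (hu : Summable u) :
    (∑' x : ℤ, Complex.exp (Complex.I * (k:ℂ) * x) * u (2*x))
      = (2⁻¹ : ℂ) * ((∑' y : ℤ, Complex.exp (Complex.I * ((k/2 : ℝ):ℂ) * y) * u y)
          + ∑' y : ℤ, Complex.exp (Complex.I * ((k/2 + π : ℝ):ℂ) * y) * u y) := by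
  have hf := summable_phase (k/2) u hu
  have hg : Summable (fun y : ℤ => Complex.exp (Complex.I * ((k/2 + π : ℝ):ℂ) * y) * u y) := by
    refine (summable_phase (k/2) (fun y => ((-1:ℂ)^y) * u y) ?_).congr ?_
    · rw [← summable_norm_iff]
      have h : ∀ y : ℤ, ‖((-1:ℂ)^y) * u y‖ = ‖u y‖ := by
        intro y; rw [norm_mul, norm_zpow, norm_neg, norm_one, one_zpow, one_mul]
      simp_rw [h]; exact summable_norm_iff.mpr hu
    · intro y; rw [exp_shift]; ring
  rw [← Summable.tsum_add hf hg, ← tsum_mul_left]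
  refine Eq.trans (tsum_congr fun x => ?_)
    (Function.Injective.tsum_eq (g := fun x : ℤ => 2*x)
      (fun a b h => by dsimp at h; omega) ?_)
  · show _ = 2⁻¹ * (Complex.exp (Complex.I * ((k/2 : ℝ):ℂ) * ((2*x : ℤ):ℂ)) * u (2*x) + _)
    rw [exp_shift]
    have he : ((-1:ℂ)) ^ (2*x) = 1 := Even.neg_one_zpow ⟨x, two_mul x⟩
    rw [he, mul_one,
      show Complex.I * ((k/2 : ℝ):ℂ) * ((2*x : ℤ):ℂ) = Complex.I * (k:ℂ) * (x:ℂ) by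
        push_cast; ring]
    ring
  · intro y hy
    rcases Int.even_or_odd y with ⟨c, hc⟩ | hodd
    · exact ⟨c, by dsimp; omega⟩
    · exfalso
      apply hy
      show 2⁻¹ * (_ + Complex.exp (Complex.I * ((k/2 + π : ℝ):ℂ) * (y:ℂ)) * u y) = 0
      rw [exp_shift, Odd.neg_one_zpow hodd]
      ring

lemma tsum_odd_half (k : ℝ) (u : ℤ → ℂ) (hu : Summable u) (s : ℤ) (hs : s = 1 ∨ s = -1) :
    (∑' x : ℤ, Complex.exp (Complex.I * (k:ℂ) * x) * u (2*x + s))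
      = (2⁻¹ : ℂ) * (Complex.exp (-Complex.I * ((k/2 : ℝ):ℂ) * (s:ℂ)) *
          ((∑' y : ℤ, Complex.exp (Complex.I * ((k/2 : ℝ):ℂ) * y) * u y)
            - ∑' y : ℤ, Complex.exp (Complex.I * ((k/2 + π : ℝ):ℂ) * y) * u y)) := by
  have hf := summable_phase (k/2) u hu
  have hg : Summable (fun y : ℤ => Complex.exp (Complex.I * ((k/2 + π : ℝ):ℂ) * y) * u y) := by
    refine (summable_phase (k/2) (fun y => ((-1:ℂ)^y) * u y) ?_).congr ?_
    · rw [← summable_norm_iff]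
      have h : ∀ y : ℤ, ‖((-1:ℂ)^y) * u y‖ = ‖u y‖ := by
        intro y; rw [norm_mul, norm_zpow, norm_neg, norm_one, one_zpow, one_mul]
      simp_rw [h]; exact summable_norm_iff.mpr hu
    · intro y; rw [exp_shift]; ring
  rw [← Summable.tsum_sub hf hg, ← tsum_mul_left, ← tsum_mul_left]
  refine Eq.trans (tsum_congr fun x => ?_)
    (Function.Injective.tsum_eq (g := fun x : ℤ => 2*x + s)
      (fun a b h => by dsimp at h; omega) ?_)
  · show _ = 2⁻¹ * (_ * (Complex.exp (Complex.I * ((k/2 : ℝ):ℂ) * ((2*x + s : ℤ):ℂ)) * u (2*x+s)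
        - Complex.exp (Complex.I * ((k/2 + π : ℝ):ℂ) * ((2*x + s : ℤ):ℂ)) * u (2*x+s)))
    rw [exp_shift]
    have hodd : Odd (2*x + s) := by
      rcases hs with rfl | rfl
      · exact ⟨x, by ring⟩
      · exact ⟨x - 1, by ring⟩
    rw [Odd.neg_one_zpow hodd]
    have hmul : Complex.exp (-Complex.I * ((k/2 : ℝ):ℂ) * (s:ℂ)) *
        Complex.exp (Complex.I * ((k/2 : ℝ):ℂ) * ((2*x + s : ℤ):ℂ))
          = Complex.exp (Complex.I * (k:ℂ) * (x:ℂ)) := by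
      rw [← Complex.exp_add]; congr 1; push_cast; ring
    calc Complex.exp (Complex.I * (k:ℂ) * (x:ℂ)) * u (2*x+s)
        = Complex.exp (-Complex.I * ((k/2 : ℝ):ℂ) * (s:ℂ)) *
            Complex.exp (Complex.I * ((k/2 : ℝ):ℂ) * ((2*x + s : ℤ):ℂ)) * u (2*x+s) := by
          rw [hmul]
      _ = _ := by ring
  · intro y hy
    rcases Int.even_or_odd y with ⟨c, hc⟩ | hodd
    · exfalso
      apply hy
      show 2⁻¹ * (_ * (_ - Complex.exp (Complex.I * ((k/2 + π : ℝ):ℂ) * (y:ℂ)) * u y)) = 0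
      rw [exp_shift, Even.neg_one_zpow ⟨c, by omega⟩]
      ring
    · obtain ⟨c, hc⟩ := hodd
      rcases hs with rfl | rfl
      · exact ⟨c, by dsimp; omega⟩
      · exact ⟨c + 1, by dsimp; omega⟩

/-- The symbol of the pairwise-regrouped walk satisfies
`Ŵ_r(k) = H(k/2) · diag(Ŵ(k/2), Ŵ(k/2 + π)) · H(k/2)*`. -/
theorem regrouped_symbol_formula
    (d : ℕ) (w : ℤ → Matrix (Fin d) (Fin d) ℂ)
    (hsum : ∀ i j, Summable fun x : ℤ => w x i j) (k : ℝ) :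
    symbolOf (regroupCoeff w) k
      = regroupH d (k / 2) *
          Matrix.fromBlocks (symbolOf w (k / 2)) 0 0 (symbolOf w (k / 2 + π)) *
          (regroupH d (k / 2))ᴴ := by
  set S1 := symbolOf w (k/2) with hS1
  set S2 := symbolOf w (k/2 + π) with hS2
  set E : ℂ := Complex.exp (-Complex.I * ((k/2 : ℝ):ℂ)) with hE
  have hconjE : (starRingEnd ℂ) E = Complex.exp (Complex.I * ((k/2 : ℝ):ℂ)) := by
    rw [hE, ← Complex.exp_conj, map_mul, map_neg, Complex.conj_I, Complex.conj_ofReal]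
    ring_nf
  have hEconj : E * (starRingEnd ℂ) E = 1 := by
    rw [hconjE, hE, ← Complex.exp_add]
    simp
  have hc : ((1 / Real.sqrt 2 : ℝ) : ℂ) * ((1 / Real.sqrt 2 : ℝ) : ℂ) = 2⁻¹ := by
    rw [← Complex.ofReal_mul, div_mul_div_comm, one_mul, Real.mul_self_sqrt (by norm_num)]
    norm_num
  have hR : regroupH d (k / 2) * Matrix.fromBlocks S1 0 0 S2 * (regroupH d (k / 2))ᴴ
      = (2⁻¹ : ℂ) • Matrix.fromBlocks (S1 + S2) ((starRingEnd ℂ) E • (S1 - S2))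
          (E • (S1 - S2)) (S1 + S2) := by
    have hE2 : (starRingEnd ℂ) E * E = 1 := by rw [mul_comm]; exact hEconj
    rw [regroupH]
    rw [Matrix.conjTranspose_smul, Matrix.fromBlocks_conjTranspose]
    simp only [Matrix.conjTranspose_smul, Matrix.conjTranspose_one, Matrix.conjTranspose_neg,
      Matrix.smul_mul, Matrix.mul_smul, Matrix.fromBlocks_multiply, smul_smul,
      Matrix.one_mul, Matrix.mul_one, Matrix.mul_zero, Matrix.zero_mul, add_zero, zero_add,
      Complex.conj_ofReal, hc, smul_add, smul_sub, neg_smul, Matrix.neg_mul, smul_neg]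
    simp only [Complex.star_def, Matrix.mul_neg, Matrix.mul_smul, Matrix.mul_one, smul_smul,
      Complex.conj_ofReal, hc, hEconj, hE2, one_smul, neg_neg, smul_neg, sub_neg_eq_add,
      ← sub_eq_add_neg]
    rw [← hE, hE2, hEconj, one_smul, one_smul]
  rw [hR]
  refine Matrix.ext fun i j => ?_
  rcases i with i | i <;> rcases j with j | j <;>
    rw [hS1, hS2] <;>
    simp only [symbolOf, regroupCoeff, Matrix.of_apply, Matrix.smul_apply, Matrix.add_apply,
      Matrix.sub_apply, Matrix.fromBlocks_apply₁₁, Matrix.fromBlocks_apply₁₂,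
      Matrix.fromBlocks_apply₂₁, Matrix.fromBlocks_apply₂₂, smul_eq_mul, hconjE, hE]
  · exact tsum_even_half k (fun y => w y i j) (hsum i j)
  · have h := tsum_odd_half k (fun y => w y i j) (hsum i j) (-1) (Or.inr rfl)
    rw [show (((-1):ℤ):ℂ) = -1 by norm_cast,
      show -Complex.I * ((k/2 : ℝ):ℂ) * (-1) = Complex.I * ((k/2 : ℝ):ℂ) by ring] at h
    simp_rw [show ∀ x : ℤ, 2*x + -1 = 2*x - 1 from fun x => by omega] at h
    rw [← hE, hconjE]
    exact h
  · have h := tsum_odd_half k (fun y => w y i j) (hsum i j) 1 (Or.inl rfl)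
    rw [show (((1):ℤ):ℂ) = 1 by norm_cast, mul_one] at h
    exact h
  · exact tsum_even_half k (fun y => w y i j) (hsum i j)
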